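/- Suppose m ≥ 2. If a, a' ∈ B_int differ in exactly one coordinate and b ∈ B_half, then the triangle convexHull ℝ {a, a', b} is a face of the Delone polytope of D_{2m}^* centered at u: IsExtreme ℝ (convexHull ℝ (B_int ∪ B_half)) (convexHull ℝ {a, a', b}). (Every edge of one cube of the free sum together with any vertex of the other cube spans a triangular two-dimensional face.) -/

import Mathlib

/-!
The triangle is exposed by a linear functional. On the vertices `v` of a cube of half-side `r`
around `u` in the coordinates `T`, pairing with `p - u` for a vertex `p` gives
`⟪p - u, v - u⟫ = #T r² - ‖p - v‖² / 2`, which is maximal exactly when `v = p` on `T`.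
Pair the `B_int` cube with `a - u` on `S \ {i₀}` (where `i₀` is the coordinate in which `a` and
`a'` differ) and the `B_half` cube with `b - u` on `Sᶜ`, weighted by `#Sᶜ` and `#(S \ {i₀})` so
that both maxima agree; `#(S \ {i₀}) > 0` because `m ≥ 2`. The maximizing vertices are then
exactly `a`, `a'` and `b`, and the points of a convex hull on which a linear functional attains
its maximum over the generators form a face: the hull of the maximizing generators.
-/

open Finset

section Face

variable {𝕜 E : Type*} [Field 𝕜] [LinearOrder 𝕜] [IsStrictOrderedRing 𝕜]
  [AddCommGroup E] [Module 𝕜 E] (ℓ : E →ₗ[𝕜] 𝕜) {c : 𝕜}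

theorem isExtreme_inter_setOf_eq_of_forall_le {A : Set E} (hA : ∀ x ∈ A, ℓ x ≤ c) :
    IsExtreme 𝕜 A (A ∩ {x | ℓ x = c}) := by
  refine ⟨Set.inter_subset_left, fun x₁ hx₁ x₂ hx₂ x ⟨_, hx⟩ hseg => ?_⟩
  obtain ⟨s, t, hs, ht, hst, rfl⟩ := hseg
  simp only [Set.mem_ofPred_eq, map_add, map_smul, smul_eq_mul] at hx
  have h₁ := hA x₁ hx₁
  have h₂ := hA x₂ hx₂
  refine ⟨hx₁, le_antisymm h₁ (le_of_not_gt fun hlt => ?_)⟩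
  obtain rfl : t = 1 - s := eq_sub_of_add_eq' hst
  linarith [mul_lt_mul_of_pos_left hlt hs, mul_le_mul_of_nonneg_left h₂ ht.le]

theorem convexHull_sep_eq_of_forall_le {V : Set E} (hV : ∀ v ∈ V, ℓ v ≤ c) :
    convexHull 𝕜 {v ∈ V | ℓ v = c} = convexHull 𝕜 V ∩ {x | ℓ x = c} := by
  refine (convexHull_min (fun v hv => ?_)
    ((convex_convexHull 𝕜 V).inter (convex_hyperplane ℓ.isLinear c))).antisymm ?_
  · exact ⟨subset_convexHull 𝕜 V hv.1, hv.2⟩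
  rintro x ⟨hx, hℓx⟩
  rw [_root_.convexHull_eq] at hx
  obtain ⟨ι, t, w, z, hw₀, hw₁, hz, rfl⟩ := hx
  classical
  have hdefect : ∑ i ∈ t, w i * (c - ℓ (z i)) = 0 := by
    rw [Set.mem_ofPred_eq, centerMass_eq_of_sum_1 _ _ hw₁, map_sum] at hℓx
    simp only [map_smul, smul_eq_mul] at hℓx
    simp only [mul_sub, sum_sub_distrib, ← sum_mul, hw₁, one_mul, hℓx, sub_self]
  have hface : ∀ i ∈ t, w i ≠ 0 → ℓ (z i) = c := fun i hi hwi => by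
    have := (sum_eq_zero_iff_of_nonneg fun j hj =>
      mul_nonneg (hw₀ j hj) (sub_nonneg.2 (hV _ (hz j hj)))).1 hdefect i hi
    linarith [(mul_eq_zero.1 this).resolve_left hwi]
  rw [← centerMass_filter_ne_zero]
  refine centerMass_mem_convexHull _ (fun i hi => hw₀ i (mem_filter.1 hi).1) ?_ fun i hi => ?_
  · rw [sum_filter_ne_zero, hw₁]; exact one_pos
  · obtain ⟨hi, hwi⟩ := mem_filter.1 hi
    exact ⟨hz i hi, hface i hi hwi⟩

theorem isExtreme_convexHull_sep_of_forall_le {V : Set E} (hV : ∀ v ∈ V, ℓ v ≤ c) :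
    IsExtreme 𝕜 (convexHull 𝕜 V) (convexHull 𝕜 {v ∈ V | ℓ v = c}) := by
  rw [convexHull_sep_eq_of_forall_le ℓ hV]
  exact isExtreme_inter_setOf_eq_of_forall_le ℓ fun x hx =>
    convexHull_min hV (convex_halfSpace_le ℓ.isLinear c) hx

end Face

section AbsEq

variable {R : Type*} [Field R] [LinearOrder R] [IsStrictOrderedRing R]

theorem sum_mul_eq_of_abs_eq {ι : Type*} {T : Finset ι} {p q : ι → R} {r : R}
    (hp : ∀ i ∈ T, |p i| = r) (hq : ∀ i ∈ T, |q i| = r) :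
    ∑ i ∈ T, p i * q i = #T * r ^ 2 - (∑ i ∈ T, (p i - q i) ^ 2) / 2 := by
  rw [eq_sub_iff_add_eq, sum_div, ← sum_add_distrib, ← nsmul_eq_mul, ← sum_const]
  refine sum_congr rfl fun i hi => ?_
  have hp2 : p i ^ 2 = r ^ 2 := by rw [← sq_abs, hp i hi]
  have hq2 : q i ^ 2 = r ^ 2 := by rw [← sq_abs, hq i hi]
  linear_combination (hp2 + hq2) / 2

theorem eq_or_eq_of_abs_sub_eq {x y z c r : R} (hx : |x - c| = r) (hy : |y - c| = r)
    (hz : |z - c| = r) (hyz : y ≠ z) : x = y ∨ x = z := by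
  rcases abs_eq_abs.1 (hx.trans hy.symm) with h | h
  · exact Or.inl (by linarith)
  rcases abs_eq_abs.1 (hx.trans hz.symm) with h' | h'
  · exact Or.inr (by linarith)
  exact absurd (by linarith) hyz

end AbsEq

section Cube

variable {ι : Type*}

def cubeVertices (u : EuclideanSpace ℝ ι) (S : Finset ι) (r : ℝ) : Set (EuclideanSpace ℝ ι) :=
  {x | (∀ i ∉ S, x i = u i) ∧ ∀ i ∈ S, |x i - u i| = r}

noncomputable def coordPairing (T : Finset ι) (p : EuclideanSpace ℝ ι) :
    EuclideanSpace ℝ ι →ₗ[ℝ] ℝ :=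
  ∑ i ∈ T, p i • EuclideanSpace.projₗ i

@[simp]
theorem coordPairing_apply (T : Finset ι) (p x : EuclideanSpace ℝ ι) :
    coordPairing T p x = ∑ i ∈ T, p i * x i := by
  simp [coordPairing]

variable {u p v : EuclideanSpace ℝ ι} {S T : Finset ι} {r : ℝ}

theorem eq_of_mem_cubeVertices_of_eqOn (hp : p ∈ cubeVertices u S r)
    (hv : v ∈ cubeVertices u S r) (h : ∀ i ∈ S, p i = v i) : p = v := by
  ext i
  by_cases hi : i ∈ S
  · exact h i hi
  · rw [hp.1 i hi, hv.1 i hi]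

theorem coordPairing_sub_of_mem_cubeVertices (hT : T ⊆ S) (hp : p ∈ cubeVertices u S r)
    (hv : v ∈ cubeVertices u S r) :
    coordPairing T (p - u) (v - u) = #T * r ^ 2 - (∑ i ∈ T, (p i - v i) ^ 2) / 2 := by
  rw [coordPairing_apply]
  simp only [PiLp.sub_apply]
  rw [sum_mul_eq_of_abs_eq (fun i hi => hp.2 i (hT hi)) (fun i hi => hv.2 i (hT hi))]
  simp

theorem coordPairing_sub_le_of_mem_cubeVertices (hT : T ⊆ S) (hp : p ∈ cubeVertices u S r)
    (hv : v ∈ cubeVertices u S r) : coordPairing T (p - u) (v - u) ≤ #T * r ^ 2 := by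
  rw [coordPairing_sub_of_mem_cubeVertices hT hp hv, sub_le_self_iff]
  positivity

theorem coordPairing_sub_eq_iff_of_mem_cubeVertices (hT : T ⊆ S) (hp : p ∈ cubeVertices u S r)
    (hv : v ∈ cubeVertices u S r) :
    coordPairing T (p - u) (v - u) = #T * r ^ 2 ↔ ∀ i ∈ T, p i = v i := by
  rw [coordPairing_sub_of_mem_cubeVertices hT hp hv, sub_eq_self, div_eq_zero_iff,
    or_iff_left two_ne_zero, sum_eq_zero_iff_of_nonneg fun i _ => sq_nonneg _]
  simp only [sq_eq_zero_iff, sub_eq_zero]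

theorem coordPairing_sub_of_mem_cubeVertices_of_disjoint (hT : Disjoint T S)
    (hv : v ∈ cubeVertices u S r) : coordPairing T p (v - u) = 0 := by
  rw [coordPairing_apply]
  refine sum_eq_zero fun i hi => ?_
  simp [hv.1 i (disjoint_left.1 hT hi)]

theorem eq_or_eq_of_eqOn_erase [DecidableEq ι] {a a' : EuclideanSpace ℝ ι} {i₀ : ι}
    (ha : a ∈ cubeVertices u S r) (ha' : a' ∈ cubeVertices u S r) (hv : v ∈ cubeVertices u S r)
    (hi₀ : a i₀ ≠ a' i₀) (hagree : ∀ i ≠ i₀, a i = a' i) (h : ∀ i ∈ S.erase i₀, a i = v i) :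
    v = a ∨ v = a' := by
  have hi₀S : i₀ ∈ S := by
    by_contra hi₀S
    exact hi₀ (by rw [ha.1 i₀ hi₀S, ha'.1 i₀ hi₀S])
  have hoff : ∀ i ∈ S, i ≠ i₀ → v i = a i := fun i hi hne => (h i (mem_erase.2 ⟨hne, hi⟩)).symm
  rcases eq_or_eq_of_abs_sub_eq (hv.2 i₀ hi₀S) (ha.2 i₀ hi₀S) (ha'.2 i₀ hi₀S) hi₀ with h₀ | h₀
  · refine Or.inl (eq_of_mem_cubeVertices_of_eqOn hv ha fun i hi => ?_)
    rcases eq_or_ne i i₀ with rfl | hne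
    exacts [h₀, hoff i hi hne]
  · refine Or.inr (eq_of_mem_cubeVertices_of_eqOn hv ha' fun i hi => ?_)
    rcases eq_or_ne i i₀ with rfl | hne
    exacts [h₀, (hoff i hi hne).trans (hagree i hne)]

theorem sep_union_cubeVertices_eq_triangle [Fintype ι] [DecidableEq ι]
    {a a' b : EuclideanSpace ℝ ι} {i₀ : ι} {P : EuclideanSpace ℝ ι → Prop}
    (ha : a ∈ cubeVertices u S r) (ha' : a' ∈ cubeVertices u S r) (hb : b ∈ cubeVertices u Sᶜ r)
    (hi₀ : a i₀ ≠ a' i₀) (hagree : ∀ i ≠ i₀, a i = a' i)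
    (hP : ∀ v ∈ cubeVertices u S r, P v ↔ ∀ i ∈ S.erase i₀, a i = v i)
    (hPc : ∀ v ∈ cubeVertices u Sᶜ r, P v ↔ ∀ i ∈ Sᶜ, b i = v i) :
    {v ∈ cubeVertices u S r ∪ cubeVertices u Sᶜ r | P v} = {a, a', b} := by
  ext v
  simp only [Set.mem_sep_iff, Set.mem_insert_iff, Set.mem_singleton_iff]
  constructor
  · rintro ⟨hv | hv, hPv⟩
    · exact (eq_or_eq_of_eqOn_erase ha ha' hv hi₀ hagree ((hP v hv).1 hPv)).imp_right Or.inl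
    · exact Or.inr (Or.inr (eq_of_mem_cubeVertices_of_eqOn hv hb fun i hi =>
        ((hPc v hv).1 hPv i hi).symm))
  · rintro (rfl | rfl | rfl)
    · exact ⟨Or.inl ha, (hP _ ha).2 fun i _ => rfl⟩
    · exact ⟨Or.inl ha', (hP _ ha').2 fun i hi => hagree i (ne_of_mem_erase hi)⟩
    · exact ⟨Or.inr hb, (hPc _ hb).2 fun i _ => rfl⟩

theorem isExtreme_convexHull_triangle_of_mem_cubeVertices [Fintype ι] [DecidableEq ι]
    (hS : 2 ≤ #S) (hSc : Sᶜ.Nonempty) {a a' b : EuclideanSpace ℝ ι}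
    (ha : a ∈ cubeVertices u S r) (ha' : a' ∈ cubeVertices u S r) (hdiff : ∃! i, a i ≠ a' i)
    (hb : b ∈ cubeVertices u Sᶜ r) :
    IsExtreme ℝ (convexHull ℝ (cubeVertices u S r ∪ cubeVertices u Sᶜ r))
      (convexHull ℝ {a, a', b}) := by
  obtain ⟨i₀, hi₀, huniq⟩ := hdiff
  have hagree : ∀ i ≠ i₀, a i = a' i := fun i hi => not_not.1 (mt (huniq i) hi)
  have hT : (#(S.erase i₀) : ℝ) ≠ 0 := by
    have := pred_card_le_card_erase (s := S) (a := i₀)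
    exact Nat.cast_ne_zero.2 (by omega)
  set T := S.erase i₀
  have hSc' : (#Sᶜ : ℝ) ≠ 0 := Nat.cast_ne_zero.2 hSc.card_pos.ne'
  set ℓ := (#Sᶜ : ℝ) • coordPairing T (a - u) + (#T : ℝ) • coordPairing Sᶜ (b - u)
  set K : ℝ := #Sᶜ * (#T * r ^ 2)
  have hTS : T ⊆ S := erase_subset _ _
  have hℓ_int : ∀ v ∈ cubeVertices u S r,
      ℓ (v - u) = #Sᶜ * coordPairing T (a - u) (v - u) := fun v hv => by
    simp only [ℓ, LinearMap.add_apply, LinearMap.smul_apply, smul_eq_mul,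
      coordPairing_sub_of_mem_cubeVertices_of_disjoint disjoint_compl_left hv, mul_zero, add_zero]
  have hℓ_half : ∀ v ∈ cubeVertices u Sᶜ r,
      ℓ (v - u) = #T * coordPairing Sᶜ (b - u) (v - u) := fun v hv => by
    simp only [ℓ, LinearMap.add_apply, LinearMap.smul_apply, smul_eq_mul,
      coordPairing_sub_of_mem_cubeVertices_of_disjoint
        (disjoint_compl_right.mono_left hTS) hv, mul_zero, zero_add]
  have hle : ∀ v ∈ cubeVertices u S r ∪ cubeVertices u Sᶜ r, ℓ v ≤ ℓ u + K := by
    rintro v (hv | hv) <;> rw [← sub_le_iff_le_add', ← map_sub]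
    · rw [hℓ_int v hv]
      exact mul_le_mul_of_nonneg_left
        (coordPairing_sub_le_of_mem_cubeVertices hTS ha hv) (Nat.cast_nonneg _)
    · rw [hℓ_half v hv, show K = #T * (#Sᶜ * r ^ 2) from mul_left_comm _ _ _]
      exact mul_le_mul_of_nonneg_left
        (coordPairing_sub_le_of_mem_cubeVertices subset_rfl hb hv) (Nat.cast_nonneg _)
  have hmax_int : ∀ v ∈ cubeVertices u S r, ℓ v = ℓ u + K ↔ ∀ i ∈ T, a i = v i := fun v hv => by
    rw [← sub_eq_iff_eq_add', ← map_sub, hℓ_int v hv, mul_right_inj' hSc',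
      coordPairing_sub_eq_iff_of_mem_cubeVertices hTS ha hv]
  have hmax_half : ∀ v ∈ cubeVertices u Sᶜ r, ℓ v = ℓ u + K ↔ ∀ i ∈ Sᶜ, b i = v i := fun v hv => by
    rw [← sub_eq_iff_eq_add', ← map_sub, hℓ_half v hv,
      show K = #T * (#Sᶜ * r ^ 2) from mul_left_comm _ _ _, mul_right_inj' hT,
      coordPairing_sub_eq_iff_of_mem_cubeVertices subset_rfl hb hv]
  rw [← sep_union_cubeVertices_eq_triangle ha ha' hb hi₀ hagree hmax_int hmax_half]
  exact isExtreme_convexHull_sep_of_forall_le ℓ hle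

end Cube

theorem stmt_8_general (m : ℕ) (hm : 2 ≤ m)
    (S : Finset (Fin (2 * m))) (hS : S.card = m)
    (u : EuclideanSpace ℝ (Fin (2 * m)))
    (Bhalf Bint : Set (EuclideanSpace ℝ (Fin (2 * m))))
    (hBhalf : Bhalf = {x : EuclideanSpace ℝ (Fin (2 * m)) |
      (∀ i ∈ S, x i = u i) ∧ (∀ i ∉ S, |x i - u i| = 1/2)})
    (hBint : Bint = {x : EuclideanSpace ℝ (Fin (2 * m)) |
      (∀ i ∉ S, x i = u i) ∧ (∀ i ∈ S, |x i - u i| = 1/2)})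
    (a a' : EuclideanSpace ℝ (Fin (2 * m))) (ha : a ∈ Bint) (ha' : a' ∈ Bint)
    (hdiff : ∃! i : Fin (2 * m), a i ≠ a' i)
    (b : EuclideanSpace ℝ (Fin (2 * m))) (hb : b ∈ Bhalf) :
    IsExtreme ℝ (convexHull ℝ (Bint ∪ Bhalf))
      (convexHull ℝ {a, a', b}) := by
  have hBhalf' : Bhalf = cubeVertices u Sᶜ (1 / 2) := by
    simp only [hBhalf, cubeVertices, mem_compl, not_not]
  subst hBhalf' hBint
  have hSc : Sᶜ.Nonempty := by
    rw [← card_pos, card_compl, Fintype.card_fin]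
    omega
  exact isExtreme_convexHull_triangle_of_mem_cubeVertices (hm.trans hS.ge) hSc ha ha' hdiff hb

/-- If `m ≥ 2`, `a, a' ∈ B_int` differ in exactly one coordinate, and `b ∈ B_half`, then
the triangle `convexHull ℝ {a, a', b}` is a face of the Delone polytope (free sum) of
`D_{2m}^*` centered at `u`. -/
theorem stmt_8 (m : ℕ) (hm : 2 ≤ m)
    (S : Finset (Fin (2 * m))) (hS : S.card = m)
    (u : EuclideanSpace ℝ (Fin (2 * m)))
    (huS : ∀ i ∈ S, ∃ k : ℤ, u i = (k : ℝ) + 1/2)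
    (huI : ∀ i ∉ S, ∃ k : ℤ, u i = (k : ℝ))
    (Bhalf Bint : Set (EuclideanSpace ℝ (Fin (2 * m))))
    (hBhalf : Bhalf = {x : EuclideanSpace ℝ (Fin (2 * m)) |
      (∀ i ∈ S, x i = u i) ∧ (∀ i ∉ S, |x i - u i| = 1/2)})
    (hBint : Bint = {x : EuclideanSpace ℝ (Fin (2 * m)) |
      (∀ i ∉ S, x i = u i) ∧ (∀ i ∈ S, |x i - u i| = 1/2)})
    (a a' : EuclideanSpace ℝ (Fin (2 * m))) (ha : a ∈ Bint) (ha' : a' ∈ Bint)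
    (hdiff : ∃! i : Fin (2 * m), a i ≠ a' i)
    (b : EuclideanSpace ℝ (Fin (2 * m))) (hb : b ∈ Bhalf) :
    IsExtreme ℝ (convexHull ℝ (Bint ∪ Bhalf))
      (convexHull ℝ {a, a', b}) :=
  stmt_8_general m hm S hS u Bhalf Bint hBhalf hBint a a' ha ha' hdiff b hb
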